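/- arXiv:2101.02418 — 3 statements merged into one kernel-verified Lean document; each statement's English description precedes it below -/
import Mathlib

section
/- Let c be a fully invariant congruence on F and let n ≥ 1. The following are equivalent: (a) xⁿ is not an isoterm for c, i.e. there exists a word w ≠ xⁿ with c xⁿ w; (b) there exists m ≥ 1 such that c xⁿ xⁿ⁺ᵐ; (c) c is not contained in σ_{C_{n+1}} := FIC{(xⁿ⁺², xⁿ⁺¹), (xy, yx)}. (In variety language: the word xⁿ is not an isoterm for a monoid variety V if and only if V satisfies xⁿ ≈ xⁿ⁺ᵐ for some m ≥ 1, if and only if C_{n+1} ⊄ V.) -/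
/-- The free monoid on countably many generators. -/
abbrev F : Type := FreeMonoid ℕ

/-- The fixed pairwise distinct generators. -/
def x : F := FreeMonoid.of 0
def y : F := FreeMonoid.of 1
def z : F := FreeMonoid.of 2
def t : F := FreeMonoid.of 3

/-- A congruence on `F` is fully invariant if it is stable under every
monoid endomorphism of `F`. -/
def IsFullyInvariant (c : Con F) : Prop :=
  ∀ ξ : F →* F, ∀ u v : F, c u v → c (ξ u) (ξ v)

/-- The type of fully invariant congruences on `F`. -/
abbrev FICon : Type := {c : Con F // IsFullyInvariant c}

instance : InfSet FICon :=
  ⟨fun S => ⟨sInf (Subtype.val '' S), fun ξ u v h c hc => by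
    obtain ⟨d, hd, rfl⟩ := hc
    exact d.2 ξ u v (h d.1 ⟨d, hd, rfl⟩)⟩⟩

/-- The complete lattice of fully invariant congruences on `F`:
meets are intersections, joins are the smallest fully invariant congruences
containing the union, `⊥` is the equality relation and `⊤` is the all relation. -/
noncomputable instance : CompleteLattice FICon :=
  completeLatticeOfInf FICon (fun S =>
    ⟨fun c hc => fun u v h => h c.1 ⟨c, hc, rfl⟩,
     fun c hc => fun u v h d hd => by
        obtain ⟨e, he, rfl⟩ := hd
        exact hc he h⟩)

/-- `fic S` is the smallest fully invariant congruence on `F` containing the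
set `S` of pairs of words. -/
noncomputable def fic (S : Set (F × F)) : FICon :=
  sInf {c : FICon | ∀ p ∈ S, c.1 p.1 p.2}

/-!
Substituting for the letters turns a relation `u ≈ v` of `c` into the relations
`x^{|u|ₐ} ≈ x^{|v|ₐ}` between powers of `x`. If `c` identifies `xⁿ` with no higher power, two
distinct powers of `x` related by `c` both exceed `n`, so related words have the same letter
counts truncated at `n + 1`. The only word with the letter counts of `xⁿ` is `xⁿ`, and any two
words with the same truncated counts are identified by `σ_{C_{n+1}}`, since its quotient is a
commutative monoid satisfying `g^{n+2} = g^{n+1}`. Conversely, `σ_{C_{n+1}}` does not identify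
`xⁿ` with `x^{n+m}`: a homomorphism into `{0, …, n + 1}` under addition truncated at `n + 1`
separates them.
-/

open FreeMonoid

theorem FreeMonoid.toList_of_pow {α : Type*} (a : α) (k : ℕ) :
    toList (of a ^ k) = List.replicate k a := by
  induction k with
  | zero => rfl
  | succ k ih => rw [pow_succ, toList_mul, ih, toList_of, List.replicate_succ']

theorem FreeMonoid.eq_pow_of_count_eq {α : Type*} [DecidableEq α] {a : α} {k : ℕ}
    {w : FreeMonoid α} (h : ∀ b, w.toList.count b = (of a ^ k).toList.count b) :
    w = of a ^ k :=
  toList.injective <| by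
    rw [toList_of_pow] at h ⊢
    exact List.perm_replicate.1 (List.perm_iff_count.2 h)

theorem FreeMonoid.lift_ite_eq_pow {α M : Type*} [Monoid M] [DecidableEq α] (a : α) (g : M)
    (u : FreeMonoid α) : lift (fun b => if b = a then g else 1) u = g ^ u.toList.count a := by
  have : lift (fun b => if b = a then g else 1) = (powersHom M g).comp (count a) :=
    hom_eq fun b => by by_cases h : b = a <;> simp [h, count_of]
  rw [this]
  rfl

theorem pow_eq_pow_min_of_pow_succ {M : Type*} [Monoid M] {g : M} {N : ℕ}
    (hg : g ^ (N + 1) = g ^ N) (k : ℕ) : g ^ k = g ^ min k N := by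
  induction k with
  | zero => simp
  | succ k ih =>
    rcases le_or_gt N k with hk | hk
    · rw [pow_succ, ih, min_eq_right hk, ← pow_succ, hg, min_eq_right (by omega)]
    · rw [min_eq_left hk]

theorem FreeMonoid.map_eq_of_min_count_eq {α M : Type*} [DecidableEq α] [CommMonoid M] {N : ℕ}
    (hM : ∀ g : M, g ^ (N + 1) = g ^ N) (φ : FreeMonoid α →* M) {u v : FreeMonoid α}
    (h : ∀ a, min (u.toList.count a) N = min (v.toList.count a) N) : φ u = φ v := by
  let s := u.toList.toFinset ∪ v.toList.toFinset
  have prod_eq : ∀ w : FreeMonoid α, w.toList.toFinset ⊆ s →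
      φ w = ∏ a ∈ s, φ (of a) ^ min (w.toList.count a) N := by
    intro w hw
    rw [← lift_restrict φ, lift_apply, Finset.prod_list_map_count]
    refine Finset.prod_subset hw (fun a _ ha => ?_) |>.trans (Finset.prod_congr rfl fun a _ => ?_)
    · rw [List.count_eq_zero_of_not_mem (by simpa using ha), pow_zero]
    · exact pow_eq_pow_min_of_pow_succ (hM _) _
  rw [prod_eq u Finset.subset_union_left, prod_eq v Finset.subset_union_right]
  simp_rw [h]

abbrev Con.commMonoidOfComm {M : Type*} [Monoid M] (c : Con M) (h : ∀ a b, c (a * b) (b * a)) :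
    CommMonoid c.Quotient :=
  { (inferInstance : Monoid c.Quotient) with
    mul_comm := fun p q => Con.induction_on₂ p q fun a b => by
      rw [← Con.coe_mul, ← Con.coe_mul, Con.eq]
      exact h a b }

theorem Con.rel_of_min_count_eq {α : Type*} [DecidableEq α] (c : Con (FreeMonoid α)) {N : ℕ}
    (hcomm : ∀ u v, c (u * v) (v * u)) (hpow : ∀ u, c (u ^ (N + 1)) (u ^ N))
    {u v : FreeMonoid α} (h : ∀ a, min (u.toList.count a) N = min (v.toList.count a) N) :
    c u v := by
  have hM : ∀ g : c.Quotient, g ^ (N + 1) = g ^ N := fun g =>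
    Con.induction_on g fun u => by
      simpa only [← Con.coe_mk', ← map_pow] using c.eq.2 (hpow u)
  let := c.commMonoidOfComm hcomm
  exact c.eq.1 (map_eq_of_min_count_eq hM c.mk' h)

theorem Con.rel_pow_add {M : Type*} [Monoid M] (c : Con M) {g : M} {p q : ℕ}
    (h : c (g ^ p) (g ^ q)) (k : ℕ) : c (g ^ (p + k)) (g ^ (q + k)) := by
  simpa only [pow_add] using c.mul h (c.refl (g ^ k))

def homKernel (A M : Type*) [Monoid A] [Monoid M] : Con A where
  r u v := ∀ φ : A →* M, φ u = φ v
  iseqv := ⟨fun _ _ => rfl, fun h φ => (h φ).symm, fun h h' φ => (h φ).trans (h' φ)⟩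
  mul' h h' φ := by rw [map_mul, map_mul, h φ, h' φ]

theorem isFullyInvariant_homKernel (M : Type*) [Monoid M] : IsFullyInvariant (homKernel F M) :=
  fun ξ _ _ h φ => h (φ.comp ξ)

/-- The natural numbers `0, …, N` under addition truncated at `N`, written multiplicatively. -/
def TruncNat (N : ℕ) : Type := {k : ℕ // k ≤ N}

instance (N : ℕ) : CommMonoid (TruncNat N) where
  mul a b := ⟨min (a.1 + b.1) N, min_le_right _ _⟩
  one := ⟨0, N.zero_le⟩
  mul_assoc a b c := Subtype.ext
    (show min (min (a.1 + b.1) N + c.1) N = min (a.1 + min (b.1 + c.1) N) N by omega)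
  one_mul a := Subtype.ext (show min (0 + a.1) N = a.1 by have := a.2; omega)
  mul_one a := Subtype.ext (show min (a.1 + 0) N = a.1 by have := a.2; omega)
  mul_comm a b := Subtype.ext (show min (a.1 + b.1) N = min (b.1 + a.1) N by omega)

namespace TruncNat

variable {N : ℕ}

theorem val_pow (g : TruncNat N) (k : ℕ) : (g ^ k).1 = min (g.1 * k) N := by
  induction k with
  | zero => show 0 = min (g.1 * 0) N; omega
  | succ k ih =>
    rw [pow_succ]
    show min ((g ^ k).1 + g.1) N = min (g.1 * (k + 1)) N
    rw [ih, Nat.mul_succ]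
    omega

theorem pow_succ_eq_pow (g : TruncNat N) : g ^ (N + 1) = g ^ N := by
  apply Subtype.ext
  rw [val_pow, val_pow]
  rcases Nat.eq_zero_or_pos g.1 with h | h
  · simp [h]
  · have : N ≤ g.1 * N := Nat.le_mul_of_pos_left N h
    have : g.1 * N ≤ g.1 * (N + 1) := Nat.mul_le_mul_left _ (Nat.le_succ N)
    omega

end TruncNat

theorem fic_rel_of_mem {S : Set (F × F)} {p : F × F} (hp : p ∈ S) : (fic S).1 p.1 p.2 := by
  rintro _ ⟨c, hc, rfl⟩
  exact hc p hp

theorem fic_le {S : Set (F × F)} {c : FICon} (h : ∀ p ∈ S, c.1 p.1 p.2) : fic S ≤ c :=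
  sInf_le h

/-- `σ_{C_{n+1}}`: the index is shifted by one. -/
noncomputable def sigmaC (n : ℕ) : FICon := fic {(x ^ (n + 2), x ^ (n + 1)), (x * y, y * x)}

namespace sigmaC

variable {n : ℕ}

theorem rel_mul_comm (u v : F) : (sigmaC n).1 (u * v) (v * u) := by
  have h := (sigmaC n).2 (lift fun i => if i = 0 then u else v) _ _
    (fic_rel_of_mem (p := (x * y, y * x)) (by simp))
  simpa [x, y] using h

theorem rel_pow_succ (u : F) : (sigmaC n).1 (u ^ (n + 1 + 1)) (u ^ (n + 1)) := by
  have h := (sigmaC n).2 (lift fun _ => u) _ _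
    (fic_rel_of_mem (p := (x ^ (n + 2), x ^ (n + 1))) (by simp))
  simpa [x] using h

theorem rel_of_min_count_eq {u v : F}
    (h : ∀ a, min (u.toList.count a) (n + 1) = min (v.toList.count a) (n + 1)) :
    (sigmaC n).1 u v :=
  Con.rel_of_min_count_eq _ rel_mul_comm rel_pow_succ h

theorem le_homKernel :
    sigmaC n ≤ ⟨homKernel F (TruncNat (n + 1)), isFullyInvariant_homKernel _⟩ :=
  fic_le <| by
    rintro p (rfl | rfl) φ
    · simpa only [map_pow] using TruncNat.pow_succ_eq_pow (φ x)
    · simp only [map_mul, mul_comm]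

theorem not_rel_pow_add {m : ℕ} (hm : 1 ≤ m) : ¬ (sigmaC n).1 (x ^ n) (x ^ (n + m)) := by
  intro h
  let g : TruncNat (n + 1) := ⟨1, by omega⟩
  have hg : lift (fun _ => g) x = g := rfl
  have h := congrArg Subtype.val (le_homKernel h (lift fun _ => g))
  simp only [map_pow, hg, TruncNat.val_pow, show g.1 = 1 from rfl] at h
  omega

end sigmaC

namespace FICon

variable (c : FICon) {n : ℕ}

theorem rel_pow_count {u v : F} (h : c.1 u v) (a : ℕ) :
    c.1 (x ^ u.toList.count a) (x ^ v.toList.count a) := by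
  simpa only [lift_ite_eq_pow] using c.2 (lift fun b => if b = a then x else 1) u v h

variable {c}

theorem lt_of_rel_pow (hc : ¬ ∃ m, 1 ≤ m ∧ c.1 (x ^ n) (x ^ (n + m))) {p q : ℕ}
    (h : c.1 (x ^ p) (x ^ q)) (hpq : p < q) : n < p := by
  by_contra! hpn
  refine hc ⟨q - p, by omega, ?_⟩
  have := c.1.rel_pow_add h (n - p)
  rwa [show p + (n - p) = n by omega, show q + (n - p) = n + (q - p) by omega] at this

theorem min_count_eq_of_rel (hc : ¬ ∃ m, 1 ≤ m ∧ c.1 (x ^ n) (x ^ (n + m))) {u v : F}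
    (h : c.1 u v) (a : ℕ) :
    min (u.toList.count a) (n + 1) = min (v.toList.count a) (n + 1) := by
  have huv := c.rel_pow_count h a
  rcases lt_trichotomy (u.toList.count a) (v.toList.count a) with hlt | heq | hgt
  · have := lt_of_rel_pow hc huv hlt
    omega
  · rw [heq]
  · have := lt_of_rel_pow hc (c.1.symm huv) hgt
    omega

end FICon

theorem isoterm_tfae_general (c : FICon) (n : ℕ) :
    ((∃ w : F, w ≠ x ^ n ∧ c.1 (x ^ n) w) ↔
      (∃ m : ℕ, 1 ≤ m ∧ c.1 (x ^ n) (x ^ (n + m)))) ∧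
    ((∃ m : ℕ, 1 ≤ m ∧ c.1 (x ^ n) (x ^ (n + m))) ↔
      ¬ c ≤ fic {(x ^ (n + 2), x ^ (n + 1)), (x * y, y * x)}) := by
  refine ⟨⟨fun ⟨w, hw, hcw⟩ => ?_, fun ⟨m, hm, hcm⟩ => ⟨_, ?_, hcm⟩⟩,
    ⟨fun ⟨m, hm, hcm⟩ hle => sigmaC.not_rel_pow_add hm (hle hcm), fun hle => ?_⟩⟩
  · by_contra hc
    refine hw (eq_pow_of_count_eq fun a => ?_)
    change _ = (x ^ n).toList.count a
    have hmin := c.min_count_eq_of_rel hc hcw a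
    have hx : (x ^ n).toList.count a ≤ n := by
      simp only [x, toList_of_pow, List.count_replicate]
      split <;> omega
    omega
  · intro h
    have := congrArg (fun w : F => w.toList.length) h
    simp only [x, toList_of_pow, List.length_replicate] at this
    omega
  · by_contra hc
    exact hle fun u v huv => sigmaC.rel_of_min_count_eq (c.min_count_eq_of_rel hc huv)

/-- Let `c` be a fully invariant congruence on `F` and `n ≥ 1`.  The following
are equivalent: (a) `xⁿ` is not an isoterm for `c`; (b) `c` relates `xⁿ` and
`xⁿ⁺ᵐ` for some `m ≥ 1`; (c) `c` is not contained in
`σ_{C_{n+1}} = FIC{(xⁿ⁺², xⁿ⁺¹), (xy, yx)}`. -/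
theorem isoterm_tfae (c : FICon) (n : ℕ) (hn : 1 ≤ n) :
    ((∃ w : F, w ≠ x ^ n ∧ c.1 (x ^ n) w) ↔
      (∃ m : ℕ, 1 ≤ m ∧ c.1 (x ^ n) (x ^ (n + m)))) ∧
    ((∃ m : ℕ, 1 ≤ m ∧ c.1 (x ^ n) (x ^ (n + m))) ↔
      ¬ c ≤ fic {(x ^ (n + 2), x ^ (n + 1)), (x * y, y * x)}) :=
  isoterm_tfae_general c n
end

section
/- Let c be a fully invariant congruence on F such that c is noncommutative (¬ c (xy) (yx)) and not completely regular (for every n ≥ 1, ¬ c x (xⁿ⁺¹)). Then c ⊆ σ_D. (In variety language: if a monoid variety V is non-completely regular and noncommutative, then D ⊆ V.) -/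
noncomputable def sigmaD : FICon :=
  fic {(x ^ 3, x ^ 2), (x ^ 2 * y, x * y * x), (x * y * x, y * x ^ 2)}

/-!
Substituting `x` for one letter and erasing the others shows that a non-completely-regular `c`
preserves the number of occurrences of each letter, counted up to "at least twice"; substituting
`x` and `y` for two letters occurring once shows that a noncommutative `c` preserves their order.
On the other side, in a monoid satisfying the identities of `D` squares are central, `p q p = q p²`
and `p³ = p²`, so the value of a word depends only on its linear part (the letters occurring once,
in order) and on the set of letters occurring at least twice.
-/

open FreeMonoid

structure InVarietyD (M : Type*) [Monoid M] : Prop where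
  pow_three : ∀ p : M, p ^ 3 = p ^ 2
  sq_mul : ∀ p q : M, p ^ 2 * q = p * q * p
  mul_mul_self : ∀ p q : M, p * q * p = q * p ^ 2

namespace InVarietyD

variable {M : Type*} [Monoid M]

theorem sq_mul_comm (hM : InVarietyD M) (p q : M) : p ^ 2 * q = q * p ^ 2 :=
  (hM.sq_mul p q).trans (hM.mul_mul_self p q)

def centralSq (hM : InVarietyD M) (p : M) : Submonoid.center M :=
  ⟨p ^ 2, Submonoid.mem_center_iff.2 fun q => (hM.sq_mul_comm p q).symm⟩

variable {α : Type*} [DecidableEq α] (hM : InVarietyD M) (f : α → M)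
include hM

theorem sq_mul_prod_map (a : α) (l : List α) :
    f a ^ 2 * (l.map f).prod = ((l.filter (· ≠ a)).map f).prod * f a ^ 2 := by
  induction l with
  | nil => simp
  | cons b l ih =>
    by_cases hb : b = a
    · subst hb
      rw [List.filter_cons_of_neg (by simp), List.map_cons, List.prod_cons, ← mul_assoc,
        ← pow_succ, hM.pow_three, ih]
    · rw [List.filter_cons_of_pos (by simpa), List.map_cons, List.map_cons, List.prod_cons,
        List.prod_cons, ← mul_assoc, hM.sq_mul_comm, mul_assoc, ih, mul_assoc]

theorem mul_prod_map_of_mem {a : α} {l : List α} (ha : a ∈ l) :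
    f a * (l.map f).prod = ((l.filter (· ≠ a)).map f).prod * f a ^ 2 := by
  obtain ⟨p, q, rfl⟩ := List.append_of_mem ha
  calc f a * ((p ++ a :: q).map f).prod
      = f a * (p.map f).prod * f a * (q.map f).prod := by simp [mul_assoc]
    _ = f a ^ 2 * ((p ++ q).map f).prod := by
      rw [hM.mul_mul_self, ← hM.sq_mul_comm]; simp [mul_assoc]
    _ = _ := by rw [hM.sq_mul_prod_map]; simp [List.filter_append]

theorem prod_map_of_two_le_count {a : α} {l : List α} (h : 2 ≤ l.count a) :
    (l.map f).prod = ((l.filter (· ≠ a)).map f).prod * f a ^ 2 := by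
  induction l with
  | nil => simp at h
  | cons b l ih =>
    by_cases hb : b = a
    · subst hb
      rw [List.count_cons_self] at h
      rw [List.map_cons, List.prod_cons, hM.mul_prod_map_of_mem f (List.count_pos_iff.1 (by omega)),
        List.filter_cons_of_neg (by simp)]
    · rw [List.count_cons_of_ne hb] at h
      rw [List.filter_cons_of_pos (by simpa), List.map_cons, List.map_cons, List.prod_cons,
        List.prod_cons, ih h, mul_assoc]

theorem prod_map_eq_filter_mul_centralSq (l : List α) (S : Finset α)
    (hS : ∀ a ∈ S, 2 ≤ l.count a) :
    (l.map f).prod = ((l.filter (· ∉ S)).map f).prod * ↑(∏ a ∈ S, hM.centralSq (f a)) := by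
  induction S using Finset.induction_on with
  | empty => simp
  | insert a S haS ih =>
    have hcount : 2 ≤ (l.filter (· ∉ S)).count a := by
      rw [List.count_filter (by simpa)]; exact hS a (Finset.mem_insert_self a S)
    rw [ih fun b hb => hS b (Finset.mem_insert_of_mem hb), hM.prod_map_of_two_le_count f hcount,
      Finset.prod_insert haS, Submonoid.coe_mul, mul_assoc, List.filter_filter]
    congr 3
    ext b
    simp

end InVarietyD

def FreeMonoid.eraseUnless {α : Type*} (p : α → Prop) [DecidablePred p] :
    FreeMonoid α →* FreeMonoid α :=
  lift fun n => if p n then of n else 1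

theorem FreeMonoid.eraseUnless_ofList {α : Type*} (p : α → Prop) [DecidablePred p] (l : List α) :
    eraseUnless p (ofList l) = ofList (l.filter p) := by
  induction l with
  | nil => rfl
  | cons a l ih =>
    rw [ofList_cons, map_mul, ih, List.filter_cons]
    by_cases ha : p a <;> simp [eraseUnless, ha, ofList_cons]

def nonlinearLetters (w : F) : Finset ℕ := {a ∈ w.toList.toFinset | 2 ≤ w.toList.count a}

theorem mem_nonlinearLetters {w : F} {a : ℕ} : a ∈ nonlinearLetters w ↔ 2 ≤ w.toList.count a := by
  simp only [nonlinearLetters, Finset.mem_filter, List.mem_toFinset, and_iff_right_iff_imp]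
  exact fun h => List.count_pos_iff.1 (by omega)

def linearPart (w : F) : List ℕ := w.toList.filter (· ∉ nonlinearLetters w)

theorem InVarietyD.map_eq_linearPart_mul {M : Type*} [Monoid M] (hM : InVarietyD M) (φ : F →* M)
    (w : F) : φ w = ((linearPart w).map (φ ∘ of)).prod *
      ↑(∏ a ∈ nonlinearLetters w, hM.centralSq (φ (of a))) := by
  rw [← lift_restrict φ, lift_apply]
  exact hM.prod_map_eq_filter_mul_centralSq _ _ _ fun a => mem_nonlinearLetters.1

theorem min_two_eq_of_rel_pow {c : Con F} (hncr : ∀ n : ℕ, 1 ≤ n → ¬ c x (x ^ (n + 1)))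
    {m k : ℕ} (h : c (x ^ m) (x ^ k)) : min m 2 = min k 2 := by
  have key : ∀ {m k : ℕ}, c (x ^ m) (x ^ k) → m ≤ 1 → m < k → False := fun {m k} h hm hmk =>
    hncr (k - m) (by omega) <| by
      have := c.mul (c.refl (x ^ (1 - m))) h
      rwa [← pow_add, ← pow_add, show 1 - m + m = 1 by omega, pow_one,
        show 1 - m + k = k - m + 1 by omega] at this
  rcases lt_trichotomy m k with hmk | rfl | hmk
  · by_contra; exact key h (by omega) hmk
  · rfl
  · by_contra; exact key (c.symm h) (by omega) hmk

namespace IsFullyInvariant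

variable {c : Con F} (hc : IsFullyInvariant c)
include hc

theorem map_eq_of_rel {u v : F} (h : c u v) (φ : F →* c.Quotient) : φ u = φ v := by
  let ξ : F →* F := lift fun n => Function.surjInv c.mk'_surjective (φ (of n))
  have hξ : c.mk'.comp ξ = φ := hom_eq fun n => Function.surjInv_eq _ _
  rw [← hξ]
  exact c.eq.2 (hc ξ u v h)

theorem inVarietyD (h₁ : c (x ^ 3) (x ^ 2)) (h₂ : c (x ^ 2 * y) (x * y * x))
    (h₃ : c (x * y * x) (y * x ^ 2)) : InVarietyD c.Quotient := by
  have substitute : ∀ {s t : F}, c s t → ∀ p q : c.Quotient,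
      lift (fun n => if n = 0 then p else q) s = lift (fun n => if n = 0 then p else q) t :=
    fun h _ _ => hc.map_eq_of_rel h _
  exact ⟨fun p => by simpa [x] using substitute h₁ p 1,
    fun p q => by simpa [x, y] using substitute h₂ p q,
    fun p q => by simpa [x, y] using substitute h₃ p q⟩

theorem min_count_two_eq (hncr : ∀ n : ℕ, 1 ≤ n → ¬ c x (x ^ (n + 1))) {u v : F} (h : c u v)
    (a : ℕ) : min (u.toList.count a) 2 = min (v.toList.count a) 2 := by
  let ξ : F →* F := lift fun n => if n = a then x else 1
  have hξ : ∀ w, ξ w = x ^ w.toList.count a := fun w => by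
    rw [lift_apply, List.prod_map_eq_pow_single a _ fun b hb _ => if_neg hb, if_pos rfl]
  exact min_two_eq_of_rel_pow hncr (by simpa only [hξ] using hc ξ u v h)

theorem nonlinearLetters_eq (hncr : ∀ n : ℕ, 1 ≤ n → ¬ c x (x ^ (n + 1))) {u v : F} (h : c u v) :
    nonlinearLetters u = nonlinearLetters v := by
  ext a
  have := hc.min_count_two_eq hncr h a
  rw [mem_nonlinearLetters, mem_nonlinearLetters]
  omega

theorem not_rel_cons_cons (hnc : ¬ c (x * y) (y * x)) {a b : ℕ} {l₁ l₂ : List ℕ} (hab : a ≠ b)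
    (hnd₁ : (a :: l₁).Nodup) (hnd₂ : (b :: l₂).Nodup) (hb : b ∈ l₁) (ha : a ∈ l₂) :
    ¬ c (ofList (a :: l₁)) (ofList (b :: l₂)) := by
  rw [List.nodup_cons] at hnd₁ hnd₂
  let g : ℕ → F := fun n => if n = a then x else if n = b then y else 1
  have single : ∀ {l : List ℕ} {e : ℕ}, l.Nodup → e ∈ l → (∀ n ∈ l, n ≠ e → g n = 1) →
      (l.map g).prod = g e := fun hl he h1 => by
    rw [List.prod_map_eq_pow_single _ g fun n hn hnl => h1 n hnl hn,
      List.count_eq_one_of_mem hl he, pow_one]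
  have h₁ : (l₁.map g).prod = y := by
    rw [single hnd₁.2 hb fun n hn hnb => by simp [g, hnb, ne_of_mem_of_not_mem hn hnd₁.1]]
    simp [g, Ne.symm hab]
  have h₂ : (l₂.map g).prod = x := by
    rw [single hnd₂.2 ha fun n hn hna => by simp [g, hna, ne_of_mem_of_not_mem hn hnd₂.1]]
    simp [g]
  intro h
  apply hnc
  simpa [lift_ofList, h₁, h₂, g, hab, Ne.symm hab] using hc (lift g) _ _ h

theorem eq_of_rel_of_perm (hnc : ¬ c (x * y) (y * x)) {l₁ l₂ : List ℕ} (hnd : l₁.Nodup)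
    (hp : l₁.Perm l₂) (h : c (ofList l₁) (ofList l₂)) : l₁ = l₂ := by
  induction l₁ generalizing l₂ with
  | nil => exact hp.nil_eq
  | cons a l₁ ih =>
    cases l₂ with
    | nil => exact absurd hp.eq_nil (List.cons_ne_nil _ _)
    | cons b l₂ =>
      have hnd₂ : (b :: l₂).Nodup := hp.nodup_iff.1 hnd
      by_cases hab : a = b
      · subst hab
        have erase : ∀ {l : List ℕ}, (a :: l).Nodup → (a :: l).filter (· ≠ a) = l := fun hl => by
          rw [List.filter_cons_of_neg (by simp), List.filter_eq_self]
          exact fun n hn => by simpa using ne_of_mem_of_not_mem hn (List.nodup_cons.1 hl).1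
        have h' := hc (eraseUnless (· ≠ a)) _ _ h
        rw [eraseUnless_ofList, eraseUnless_ofList, erase hnd, erase hnd₂] at h'
        rw [ih (List.nodup_cons.1 hnd).2 ((List.perm_cons a).1 hp) h']
      · exact absurd h <| hc.not_rel_cons_cons hnc hab hnd hnd₂
          ((List.mem_cons.1 (hp.mem_iff.2 List.mem_cons_self)).resolve_left (Ne.symm hab))
          ((List.mem_cons.1 (hp.mem_iff.1 List.mem_cons_self)).resolve_left hab)

theorem linearPart_eq (hnc : ¬ c (x * y) (y * x)) (hncr : ∀ n : ℕ, 1 ≤ n → ¬ c x (x ^ (n + 1)))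
    {u v : F} (h : c u v) : linearPart u = linearPart v := by
  have hcount := hc.min_count_two_eq hncr h
  rw [linearPart, linearPart, ← hc.nonlinearLetters_eq hncr h]
  set S := nonlinearLetters u
  have count_filter : ∀ (w : F) (a : ℕ), a ∉ S →
      (w.toList.filter (· ∉ S)).count a = w.toList.count a :=
    fun w a ha => List.count_filter (by simpa)
  have count_filter_of_mem : ∀ (w : F) (a : ℕ), a ∈ S → (w.toList.filter (· ∉ S)).count a = 0 :=
    fun w a ha => List.count_eq_zero.2 fun hmem => by simp_all
  refine hc.eq_of_rel_of_perm hnc ?_ ?_ ?_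
  · refine List.nodup_iff_count_le_one.2 fun a => ?_
    by_cases ha : a ∈ S
    · rw [count_filter_of_mem u a ha]; exact zero_le_one
    · rw [count_filter u a ha]
      rw [mem_nonlinearLetters] at ha
      omega
  · refine List.perm_iff_count.2 fun a => ?_
    by_cases ha : a ∈ S
    · rw [count_filter_of_mem u a ha, count_filter_of_mem v a ha]
    · rw [count_filter u a ha, count_filter v a ha]
      have := hcount a
      rw [mem_nonlinearLetters] at ha
      omega
  · convert hc (eraseUnless (· ∉ S)) u v h using 1 <;> exact (eraseUnless_ofList _ _).symm

end IsFullyInvariant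

/-- If a fully invariant congruence `c` on `F` is noncommutative and not
completely regular, then `c ⊆ σ_D`.  (In variety language: every
non-completely regular noncommutative monoid variety contains `D`.) -/
theorem le_sigmaD_of_noncommutative_noncr (c : FICon)
    (hnc : ¬ c.1 (x * y) (y * x))
    (hncr : ∀ n : ℕ, 1 ≤ n → ¬ c.1 x (x ^ (n + 1))) :
    c ≤ sigmaD := by
  refine le_sInf fun d hd => Con.le_def.2 fun {u v} huv => ?_
  have hM : InVarietyD d.1.Quotient :=
    d.2.inVarietyD (hd (_, _) (by simp)) (hd (_, _) (by simp)) (hd (_, _) (by simp))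
  refine d.1.eq.1 ?_
  show d.1.mk' u = d.1.mk' v
  rw [hM.map_eq_linearPart_mul, hM.map_eq_linearPart_mul, c.2.linearPart_eq hnc hncr huv,
    c.2.nonlinearLetters_eq hncr huv]
end

section
/- Let c be a fully invariant congruence on F with c ≠ ⊥ (i.e. c corresponds to a proper monoid variety) such that c is a modular element of the lattice 𝓛 of fully invariant congruences on F. Then there exist n, m ≥ 1 such that c xⁿ xⁿ⁺ᵐ. (In variety language: every proper monoid variety that is a modular element of the lattice of monoid varieties is periodic.) -/
/-!
Suppose `c` is not periodic. Sending one letter to `x` and all others to `1` shows that `c` only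
relates words with the same content. Take `w₁ ≠ w₂` of common length `n` with `c w₁ w₂`, a letter
`z` occurring in neither, `Bᵢ = z wᵢ`, `J = 2(n + 1)`, `u = B₂ B₁ᴶ` and `v = B₂ B₁ᴶ⁺¹`. Let `b` be
the fully invariant congruence of `x^(J+1) = x^(J+2)`, and `d` the meet of that of `x^J = x^(J+1)`
with the identities of the monoid of length-`J` prefixes. Then `u c B₁ᴶ⁺¹ b B₁ᴶ⁺² c v` and
`u d v`, so `(c ⊔ b) ⊓ d` relates `u` and `v`.

On the other hand, let `P w` say that `w` has the content and the length-`J` prefix of `u`, and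
that no `z`-free factor of `w` is longer than `n`. Both `c ⊓ d` and `b` lie in the syntactic
congruence of `P`: content and prefix are identities, and `z`-gaps survive pumping by `J`. A word
`a U^(J+1) a'` satisfying `P` must have `z ∈ U` by the gap bound, and then counting `z`, comparing
lengths and prefixes makes it `U^(J+1)` with `U = B₂ = B₁`. Since `P u` holds and `P v` fails
(`v` has one more `z`), `(c ⊓ d) ⊔ b` does not relate `u` and `v`.
-/

namespace List
variable {α : Type*} {z : α} {f X Y : List α}

theorem infix_or_infix_of_infix_append_cons (hz : z ∉ f) (h : f <:+: X ++ z :: Y) :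
    f <:+: X ∨ f <:+: Y := by
  obtain ⟨s, t, hst⟩ := h
  rcases append_eq_append_iff.1 hst with ⟨a, hX, -⟩ | ⟨c, hsf, hzY⟩
  · exact .inl ⟨s, a, hX.symm⟩
  · rcases c with _ | ⟨w, c⟩
    · exact .inl ⟨s, [], by simpa using hsf⟩
    · simp only [cons_append, cons.injEq] at hzY
      obtain ⟨rfl, rfl⟩ := hzY
      rcases append_eq_append_iff.1 hsf with ⟨a, -, rfl⟩ | ⟨d, -, hc⟩
      · simp at hz
      · rcases d with _ | ⟨v, d⟩
        · rw [nil_append] at hc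
          exact absurd (hc ▸ mem_cons_self) hz
        · simp only [cons_append, cons.injEq] at hc
          exact .inr ⟨d, t, by rw [hc.2]⟩

end List

namespace FreeMonoid
variable {α : Type*}

theorem toList_pow (U : FreeMonoid α) (k : ℕ) :
    (U ^ k).toList = (List.replicate k U.toList).flatten := by
  induction k with
  | zero => rfl
  | succ k ih => rw [pow_succ, toList_mul, ih, List.replicate_succ', List.flatten_append]; simp

theorem length_toList_pow (U : FreeMonoid α) (k : ℕ) :
    (U ^ k).toList.length = k * U.toList.length := by
  simp [toList_pow]

theorem count_toList_pow [DecidableEq α] (z : α) (U : FreeMonoid α) (k : ℕ) :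
    (U ^ k).toList.count z = k * U.toList.count z := by
  simp [toList_pow, List.count_flatten]

end FreeMonoid

section Gaps
open FreeMonoid
variable {α : Type*} {z : α} {n : ℕ}

def GapsLE (z : α) (n : ℕ) (l : List α) : Prop :=
  ∀ f, f <:+: l → z ∉ f → f.length ≤ n

theorem GapsLE.mono {l l' : List α} (h : GapsLE z n l) (hl : l' <:+: l) : GapsLE z n l' :=
  fun f hf hz => h f (hf.trans hl) hz

theorem gapsLE_of_length_le {l : List α} (hl : l.length ≤ n) : GapsLE z n l :=
  fun _ hf _ => hf.length_le.trans hl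

theorem gapsLE_append_cons {X Y : List α} :
    GapsLE z n (X ++ z :: Y) ↔ GapsLE z n X ∧ GapsLE z n Y := by
  refine ⟨fun h => ⟨h.mono List.infix_append_left, h.mono ?_⟩, fun ⟨hX, hY⟩ f hf hz => ?_⟩
  · exact (List.suffix_cons z Y).isInfix.trans List.infix_append_right
  · rcases List.infix_or_infix_of_infix_append_cons hz hf with h | h
    exacts [hX f h hz, hY f h hz]

theorem gapsLE_mul_of_mul {a b : FreeMonoid α} :
    GapsLE z n (a * of z * b).toList ↔ GapsLE z n a.toList ∧ GapsLE z n b.toList := by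
  simpa [toList_mul] using gapsLE_append_cons (z := z) (n := n) (X := a.toList) (Y := b.toList)

theorem gapsLE_mul_pow_mul (a P S b : FreeMonoid α) (k : ℕ) :
    GapsLE z n (a * (P * of z * S) ^ (k + 2) * b).toList ↔
      GapsLE z n (a * P).toList ∧ GapsLE z n (S * P).toList ∧ GapsLE z n (S * b).toList := by
  induction k generalizing a with
  | zero =>
    rw [show a * (P * of z * S) ^ 2 * b = a * P * of z * (S * P * of z * (S * b)) by
      simp only [pow_two, mul_assoc], gapsLE_mul_of_mul, gapsLE_mul_of_mul]
  | succ k ih =>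
    rw [show a * (P * of z * S) ^ (k + 3) * b = a * (P * of z * S) * (P * of z * S) ^ (k + 2) * b
      by rw [pow_succ' _ (k + 2)]; simp only [mul_assoc], ih,
      show a * (P * of z * S) * P = a * P * of z * (S * P) by simp only [mul_assoc],
      gapsLE_mul_of_mul]
    tauto

theorem not_gapsLE_mul_pow_mul {U : FreeMonoid α} (hz : z ∉ U.toList) (hU : U ≠ 1) {k : ℕ}
    (hk : n < k) (a b : FreeMonoid α) : ¬ GapsLE z n (a * U ^ k * b).toList := by
  intro h
  have hU' : 1 ≤ U.toList.length := Nat.one_le_iff_ne_zero.2 (mt length_eq_zero.1 hU)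
  have := h (U ^ k).toList (by simp [toList_mul]) (by simp [toList_pow, hz])
  rw [length_toList_pow] at this
  nlinarith

theorem gapsLE_pump_iff {k : ℕ} (hk : n < k) (hk2 : 2 ≤ k) (a U b : FreeMonoid α) :
    GapsLE z n (a * U ^ k * b).toList ↔ GapsLE z n (a * U ^ (k + 1) * b).toList := by
  rcases eq_or_ne U 1 with rfl | hU
  · simp
  by_cases hz : z ∈ U.toList
  · obtain ⟨P, S, hPS⟩ := List.append_of_mem hz
    obtain rfl : U = ofList P * of z * ofList S := by
      apply toList.injective; simp [toList_mul, hPS]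
    obtain ⟨k, rfl⟩ := Nat.exists_eq_add_of_le' hk2
    rw [gapsLE_mul_pow_mul, add_assoc, add_comm 2 1, ← add_assoc, gapsLE_mul_pow_mul]
  · exact iff_of_false (not_gapsLE_mul_pow_mul hz hU hk a b)
      (not_gapsLE_mul_pow_mul hz hU (by omega) a b)

end Gaps

theorem isFullyInvariant_conGen {r : F → F → Prop}
    (hr : ∀ ξ : F →* F, ∀ u v, r u v → r (ξ u) (ξ v)) : IsFullyInvariant (conGen r) :=
  fun ξ _ _ h => (Con.conGen_le.2 (fun p q hpq => Con.le_conGen _ _ (hr ξ p q hpq)) :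
    conGen r ≤ (conGen r).comap ξ (map_mul ξ)) h

namespace FICon

theorem val_inf (e f : FICon) : (e ⊓ f).1 = e.1 ⊓ f.1 := by
  let g : FICon := ⟨e.1 ⊓ f.1, fun ξ _ _ h => ⟨e.2 ξ _ _ h.1, f.2 ξ _ _ h.2⟩⟩
  have hge : g ≤ e := fun _ _ h => h.1
  have hgf : g ≤ f := fun _ _ h => h.2
  exact le_antisymm (le_inf (inf_le_left (a := e)) (inf_le_right (a := e))) (le_inf hge hgf)

theorem val_sup (e f : FICon) : (e ⊔ f).1 = e.1 ⊔ f.1 := by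
  have hfi : IsFullyInvariant (e.1 ⊔ f.1) := by
    rw [Con.sup_eq_conGen]
    exact isFullyInvariant_conGen fun ξ u v h => h.imp (e.2 ξ u v) (f.2 ξ u v)
  let g : FICon := ⟨_, hfi⟩
  have heg : e ≤ g := fun _ _ h => (le_sup_left : e.1 ≤ e.1 ⊔ f.1) h
  have hfg : f ≤ g := fun _ _ h => (le_sup_right : f.1 ≤ e.1 ⊔ f.1) h
  exact le_antisymm (sup_le heg hfg) (sup_le (le_sup_left (a := e)) (le_sup_right (a := e)))

end FICon

def identities (M : Type*) [Monoid M] : FICon :=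
  ⟨{ r := fun p q => ∀ φ : F →* M, φ p = φ q
     iseqv := ⟨fun _ _ => rfl, fun h φ => (h φ).symm, fun h h' φ => (h φ).trans (h' φ)⟩
     mul' := fun h h' φ => by rw [map_mul, map_mul, h φ, h' φ] },
   fun ξ _ _ h φ => h (φ.comp ξ)⟩

def pumpCon (k : ℕ) : FICon :=
  ⟨conGen fun p q => ∃ U, p = U ^ k ∧ q = U ^ (k + 1),
   isFullyInvariant_conGen fun ξ _ _ ⟨U, hp, hq⟩ =>
     ⟨ξ U, by rw [hp, map_pow], by rw [hq, map_pow]⟩⟩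

theorem pumpCon_rel (k : ℕ) (U : F) : (pumpCon k).1 (U ^ k) (U ^ (k + 1)) :=
  Con.le_conGen _ _ ⟨U, rfl, rfl⟩

theorem pumpCon_le {k : ℕ} {e : Con F} (h : ∀ U, e (U ^ k) (U ^ (k + 1))) : (pumpCon k).1 ≤ e :=
  Con.conGen_le.2 fun _ _ ⟨U, hp, hq⟩ => hp ▸ hq ▸ h U

theorem pumpCon_anti {k l : ℕ} (hkl : k ≤ l) : pumpCon l ≤ pumpCon k := by
  refine pumpCon_le fun U => ?_
  obtain ⟨i, rfl⟩ := Nat.exists_eq_add_of_le hkl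
  simpa only [pow_add, add_right_comm k i 1] using
    (pumpCon k).1.mul (pumpCon_rel k U) ((pumpCon k).1.refl (U ^ i))

theorem pumpCon_le_identities {M : Type*} [Monoid M] {k : ℕ}
    (h : ∀ m : M, m ^ k = m ^ (k + 1)) : pumpCon k ≤ identities M :=
  pumpCon_le fun U φ => by rw [map_pow, map_pow, h]

def syntacticCon {M : Type*} [Monoid M] (P : M → Prop) : Con M where
  r p q := ∀ a b, P (a * p * b) ↔ P (a * q * b)
  iseqv := ⟨fun _ _ _ => Iff.rfl, fun h a b => (h a b).symm,
    fun h h' a b => (h a b).trans (h' a b)⟩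
  mul' {_ q r _} h h' a b := by
    simpa only [mul_assoc] using
      (h a (r * b)).trans (by simpa only [mul_assoc] using h' (a * q) b)

theorem inf_syntacticCon_le {M : Type*} [Monoid M] (e : Con M) (u : M) (P : M → Prop) :
    e ⊓ syntacticCon P ≤ syntacticCon fun w => e w u ∧ P w :=
  fun _ _ ⟨he, hP⟩ a b => and_congr
    ⟨fun h => e.trans (e.mul (e.mul (e.refl a) (e.symm he)) (e.refl b)) h,
     fun h => e.trans (e.mul (e.mul (e.refl a) he) (e.refl b)) h⟩ (hP a b)

theorem pumpCon_le_syntacticCon {k : ℕ} {P : F → Prop}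
    (h : ∀ a U b, P (a * U ^ k * b) ↔ P (a * U ^ (k + 1) * b)) :
    (pumpCon k).1 ≤ syntacticCon P :=
  pumpCon_le fun U a b => h a U b

section Prefix
variable {α : Type*}

theorem List.take_append_take_take (N : ℕ) (l r : List α) :
    (l.take N ++ r.take N).take N = (l ++ r).take N := by
  by_cases h : N ≤ l.length
  · rw [List.take_append_of_le_length (by simpa using h), List.take_take, min_self,
      List.take_append_of_le_length h]
  · rw [List.take_of_length_le (l := l) (by omega), List.take_append, List.take_append,
      List.take_take, min_eq_left (Nat.sub_le _ _)]

def prefixCon (N : ℕ) : Con (FreeMonoid α) where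
  r p q := p.toList.take N = q.toList.take N
  iseqv := ⟨fun _ => rfl, Eq.symm, Eq.trans⟩
  mul' {p q r s} h h' := by
    simp only [FreeMonoid.toList_mul, ← List.take_append_take_take N p.toList, h, h',
      List.take_append_take_take]

theorem prefixCon_pow_eq_pow_succ {N k : ℕ} (hk : N ≤ k)
    (m : (prefixCon N : Con (FreeMonoid α)).Quotient) : m ^ k = m ^ (k + 1) := by
  obtain ⟨U, rfl⟩ := Con.mk'_surjective m
  rw [← map_pow, ← map_pow, ← Con.ker_rel, Con.mk'_ker]
  show (U ^ k).toList.take N = (U ^ (k + 1)).toList.take N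
  rcases eq_or_ne U 1 with rfl | hU
  · simp
  have hU' : 1 ≤ U.toList.length := Nat.one_le_iff_ne_zero.2 (mt FreeMonoid.length_eq_zero.1 hU)
  rw [pow_succ, FreeMonoid.toList_mul, List.take_append_of_le_length]
  rw [FreeMonoid.length_toList_pow]; nlinarith

end Prefix

def IsPeriodic (c : FICon) : Prop := ∃ n m : ℕ, 1 ≤ n ∧ 1 ≤ m ∧ c.1 (x ^ n) (x ^ (n + m))

theorem isPeriodic_of_rel_pow {c : FICon} {k l : ℕ} (hkl : k < l) (h : c.1 (x ^ k) (x ^ l)) :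
    IsPeriodic c := by
  obtain ⟨m, rfl⟩ := Nat.exists_eq_add_of_lt hkl
  rcases Nat.eq_zero_or_pos k with rfl | hk
  · refine ⟨1, m + 1, le_rfl, by omega, ?_⟩
    have h' := c.1.mul (c.1.refl x) h
    rw [← pow_succ', ← pow_succ'] at h'
    simpa only [zero_add, add_comm 1] using h'
  · exact ⟨k, m + 1, hk, by omega, h⟩

theorem le_identities_of_not_isPeriodic {c : FICon} (hc : ¬ IsPeriodic c) :
    c ≤ identities (Multiplicative ℕ) := by
  intro p q hpq φ
  have h := c.2 ((powersHom F x).comp φ) p q hpq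
  simp only [MonoidHom.comp_apply, powersHom_apply] at h
  by_contra hne
  rcases lt_or_gt_of_ne (Multiplicative.toAdd.injective.ne hne) with hlt | hlt
  exacts [hc (isPeriodic_of_rel_pow hlt h), hc (isPeriodic_of_rel_pow hlt (c.1.symm h))]

theorem exists_rel_ne_of_ne_bot {c : FICon} (hc : c ≠ ⊥) : ∃ w₁ w₂, c.1 w₁ w₂ ∧ w₁ ≠ w₂ := by
  by_contra! h
  exact hc (le_antisymm (fun p q hpq => h p q hpq ▸ (⊥ : FICon).1.refl q) bot_le)

section Identities
variable {p q : F}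

theorem count_eq_of_identities (h : (identities (Multiplicative ℕ)).1 p q) (a : ℕ) :
    p.toList.count a = q.toList.count a :=
  congrArg Multiplicative.toAdd (h (FreeMonoid.count a))

theorem length_eq_of_identities (h : (identities (Multiplicative ℕ)).1 p q) :
    p.toList.length = q.toList.length := by
  simpa [FreeMonoid.countP_apply] using h (FreeMonoid.countP fun _ => True)

theorem take_eq_of_identities {N : ℕ} (h : (identities (prefixCon N : Con F).Quotient).1 p q) :
    p.toList.take N = q.toList.take N := by
  have := h (prefixCon N : Con F).mk'
  rwa [← Con.ker_rel, Con.mk'_ker] at this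

end Identities

open FreeMonoid in
theorem toList_eq_of_pow_take {z n k : ℕ} {a U b : F} {p q : List ℕ} (hzU : z ∈ U.toList)
    (hk : n < k) (hk2 : 2 ≤ k)
    (hcount : (a * U ^ k * b).toList.count z = k)
    (hlen : (a * U ^ k * b).toList.length = k * (n + 1))
    (hgap : GapsLE z n (a * U ^ k * b).toList)
    (hpre : (a * U ^ k * b).toList.take (2 * (n + 1)) = (z :: p) ++ q) (hp : p.length = n) :
    U.toList = z :: p ∧ U.toList = q := by
  have hcU : 0 < U.toList.count z := List.count_pos_iff.2 hzU
  simp only [toList_mul, List.count_append, count_toList_pow] at hcount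
  have ha : z ∉ a.toList := List.count_eq_zero.1 (by nlinarith)
  have hb : z ∉ b.toList := List.count_eq_zero.1 (by nlinarith)
  have hb_len : b.toList.length ≤ n := hgap _ (List.suffix_append _ _).isInfix hb
  obtain rfl : a = 1 := by
    rcases ha' : a.toList with _ | ⟨a₀, a'⟩
    · exact FreeMonoid.toList.injective ha'
    · rw [toList_mul, toList_mul, ha', List.cons_append, List.cons_append,
        show 2 * (n + 1) = (2 * n + 1) + 1 by ring, List.take_succ_cons, List.cons_append] at hpre
      exact absurd (ha' ▸ (List.cons.inj hpre).1 ▸ List.mem_cons_self) ha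
  simp only [one_mul, toList_mul, List.length_append, length_toList_pow] at hlen
  have hU_len : U.toList.length = n + 1 := by
    rcases lt_trichotomy U.toList.length (n + 1) with h | h | h
    · nlinarith
    · exact h
    · nlinarith
  obtain rfl : b = 1 := FreeMonoid.length_eq_zero.1 (by simp only [FreeMonoid.length]; nlinarith)
  obtain ⟨k, rfl⟩ := Nat.exists_eq_add_of_le' hk2
  rw [one_mul, mul_one, pow_succ', pow_succ', ← mul_assoc, toList_mul, toList_mul,
    List.take_left' (by simp [hU_len]; ring)] at hpre
  exact List.append_inj hpre (by simp [hU_len, hp])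

section Witness
open FreeMonoid
variable {z n J : ℕ} {w₁ w₂ : F}

def testWord (z : ℕ) (w₁ w₂ : F) (J : ℕ) : F := of z * w₂ * (of z * w₁) ^ J

theorem count_testWord (hz₁ : z ∉ w₁.toList) (hz₂ : z ∉ w₂.toList) (J : ℕ) :
    (testWord z w₁ w₂ J).toList.count z = J + 1 := by
  simp [testWord, toList_mul, count_toList_pow, List.count_eq_zero.2 hz₁,
    List.count_eq_zero.2 hz₂]

theorem length_testWord (hn₁ : w₁.toList.length = n) (hn₂ : w₂.toList.length = n) (J : ℕ) :
    (testWord z w₁ w₂ J).toList.length = (J + 1) * (n + 1) := by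
  simp [testWord, toList_mul, length_toList_pow, hn₁, hn₂]
  ring

theorem take_testWord (hn₁ : w₁.toList.length = n) (hn₂ : w₂.toList.length = n) (hJ : 1 ≤ J) :
    (testWord z w₁ w₂ J).toList.take (2 * (n + 1)) = (z :: w₂.toList) ++ (z :: w₁.toList) := by
  obtain ⟨J, rfl⟩ := Nat.exists_eq_add_of_le' hJ
  rw [testWord, pow_succ', ← mul_assoc, toList_mul,
    List.take_left' (by simp [toList_mul, hn₁, hn₂]; ring)]
  simp [toList_mul]

theorem gapsLE_testWord (hn₁ : w₁.toList.length ≤ n) (hn₂ : w₂.toList.length ≤ n) (J : ℕ) :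
    GapsLE z n (testWord z w₁ w₂ J).toList := by
  induction J with
  | zero =>
    rw [testWord, pow_zero, mul_one, ← one_mul (of z), gapsLE_mul_of_mul]
    exact ⟨gapsLE_of_length_le (Nat.zero_le n), gapsLE_of_length_le hn₂⟩
  | succ J ih =>
    rw [testWord, pow_succ, ← mul_assoc, ← mul_assoc, gapsLE_mul_of_mul]
    exact ⟨ih, gapsLE_of_length_le hn₁⟩

theorem testWord_rel_succ {e : Con F} (hB : e (of z * w₂) (of z * w₁))
    (hpump : (pumpCon (J + 1)).1 ≤ e) : e (testWord z w₁ w₂ J) (testWord z w₁ w₂ (J + 1)) := by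
  have h₁ : e (testWord z w₁ w₂ J) ((of z * w₁) ^ (J + 1)) := by
    rw [testWord, pow_succ']; exact e.mul hB (e.refl _)
  have h₃ : e ((of z * w₁) ^ (J + 2)) (testWord z w₁ w₂ (J + 1)) := by
    rw [testWord, pow_succ' _ (J + 1)]; exact e.mul (e.symm hB) (e.refl _)
  exact e.trans h₁ (e.trans (hpump (pumpCon_rel _ _)) h₃)

def Resembles (z n : ℕ) (u w : F) : Prop :=
  ((identities (Multiplicative ℕ)).1 ⊓
    (identities (prefixCon (2 * (n + 1)) : Con F).Quotient).1) w u ∧ GapsLE z n w.toList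

theorem resembles_pump_iff (hz₁ : z ∉ w₁.toList) (hz₂ : z ∉ w₂.toList)
    (hn₁ : w₁.toList.length = n) (hn₂ : w₂.toList.length = n) (hne : w₁ ≠ w₂) (hJ : n < J)
    (a U b : F) :
    Resembles z n (testWord z w₁ w₂ J) (a * U ^ (J + 1) * b) ↔
      Resembles z n (testWord z w₁ w₂ J) (a * U ^ (J + 1 + 1) * b) := by
  rcases eq_or_ne U 1 with rfl | hU
  · simp
  by_cases hzU : z ∈ U.toList
  · refine iff_of_false (fun ⟨⟨hℕ, hT⟩, hgap⟩ => hne ?_) (fun ⟨⟨hℕ, _⟩, _⟩ => ?_)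
    · obtain ⟨h₂, h₁⟩ := toList_eq_of_pow_take hzU (by omega) (by omega)
        ((count_eq_of_identities hℕ z).trans (count_testWord hz₁ hz₂ J))
        ((length_eq_of_identities hℕ).trans (length_testWord hn₁ hn₂ J)) hgap
        ((take_eq_of_identities hT).trans (take_testWord hn₁ hn₂ (by omega))) hn₂
      exact FreeMonoid.toList.injective (List.cons.inj (h₁.symm.trans h₂)).2
    · have hcount := (count_eq_of_identities hℕ z).trans (count_testWord hz₁ hz₂ J)
      simp only [toList_mul, List.count_append, count_toList_pow] at hcount
      have := List.count_pos_iff.2 hzU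
      nlinarith
  · exact iff_of_false (fun h => not_gapsLE_mul_pow_mul hzU hU (by omega) a b h.2)
      (fun h => not_gapsLE_mul_pow_mul hzU hU (by omega) a b h.2)

theorem resembles_testWord (hn₁ : w₁.toList.length ≤ n) (hn₂ : w₂.toList.length ≤ n) (J : ℕ) :
    Resembles z n (testWord z w₁ w₂ J) (testWord z w₁ w₂ J) :=
  ⟨Con.refl _ _, gapsLE_testWord hn₁ hn₂ J⟩

theorem not_resembles_testWord_succ (hz₁ : z ∉ w₁.toList) (hz₂ : z ∉ w₂.toList) (J : ℕ) :
    ¬ Resembles z n (testWord z w₁ w₂ J) (testWord z w₁ w₂ (J + 1)) := fun ⟨⟨hℕ, _⟩, _⟩ => by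
  have := count_eq_of_identities hℕ z
  rw [count_testWord hz₁ hz₂, count_testWord hz₁ hz₂] at this
  omega

theorem sup_le_syntacticCon_resembles {c : FICon} (hc : c ≤ identities (Multiplicative ℕ))
    (hz₁ : z ∉ w₁.toList) (hz₂ : z ∉ w₂.toList) (hn₁ : w₁.toList.length = n)
    (hn₂ : w₂.toList.length = n) (hne : w₁ ≠ w₂) (hJ : n + 2 ≤ J) :
    ((c ⊓ (pumpCon J ⊓ identities (prefixCon (2 * (n + 1)) : Con F).Quotient)) ⊔
      pumpCon (J + 1)).1 ≤ syntacticCon (Resembles z n (testWord z w₁ w₂ J)) := by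
  have hgap : (pumpCon J).1 ≤ syntacticCon fun w => GapsLE z n w.toList :=
    pumpCon_le_syntacticCon (gapsLE_pump_iff (by omega) (by omega))
  rw [FICon.val_sup, FICon.val_inf, FICon.val_inf]
  refine sup_le (le_trans ?_ (inf_syntacticCon_le _ _ _))
    (pumpCon_le_syntacticCon (resembles_pump_iff hz₁ hz₂ hn₁ hn₂ hne (by omega)))
  exact le_inf (le_inf (inf_le_left.trans hc) (inf_le_right.trans inf_le_right))
    (inf_le_right.trans (inf_le_left.trans hgap))

end Witness

theorem exists_not_modular_of_le_identities {c : FICon} (hc : c ≤ identities (Multiplicative ℕ))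
    {w₁ w₂ : F} (h : c.1 w₁ w₂) (hne : w₁ ≠ w₂) :
    ∃ b d : FICon, b ≤ d ∧ (c ⊓ d) ⊔ b ≠ (c ⊔ b) ⊓ d := by
  obtain ⟨z, hz⟩ := Infinite.exists_notMem_finset (w₁.toList ++ w₂.toList).toFinset
  simp only [List.mem_toFinset, List.mem_append, not_or] at hz
  obtain ⟨n, hn₁⟩ : ∃ n, w₁.toList.length = n := ⟨_, rfl⟩
  have hn₂ : w₂.toList.length = n := (length_eq_of_identities (hc h)).symm.trans hn₁
  set J := 2 * (n + 1)
  set T : FICon := identities (prefixCon J : Con F).Quotient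
  have hPT : pumpCon J ≤ T := pumpCon_le_identities (prefixCon_pow_eq_pow_succ le_rfl)
  have hanti : pumpCon (J + 1) ≤ pumpCon J := pumpCon_anti J.le_succ
  refine ⟨pumpCon (J + 1), pumpCon J ⊓ T, le_inf hanti (hanti.trans hPT), fun heq => ?_⟩
  have huv_pump : (pumpCon J).1 (testWord z w₁ w₂ J) (testWord z w₁ w₂ (J + 1)) :=
    (pumpCon J).1.mul ((pumpCon J).1.refl _) (pumpCon_rel J _)
  have huv : ((c ⊔ pumpCon (J + 1)) ⊓ (pumpCon J ⊓ T)).1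
      (testWord z w₁ w₂ J) (testWord z w₁ w₂ (J + 1)) := by
    rw [FICon.val_inf, FICon.val_inf, FICon.val_sup]
    exact ⟨testWord_rel_succ (le_sup_left (a := c.1) (c.1.mul (c.1.refl _) (c.1.symm h)))
      le_sup_right, huv_pump, hPT huv_pump⟩
  rw [← heq] at huv
  have hres := (sup_le_syntacticCon_resembles hc hz.1 hz.2 hn₁ hn₂ hne (by omega) huv 1 1).1
  simp only [one_mul, mul_one] at hres
  exact not_resembles_testWord_succ hz.1 hz.2 J (hres (resembles_testWord hn₁.le hn₂.le J))

/-- Every proper monoid variety that is a modular element of the lattice of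
monoid varieties is periodic: if a fully invariant congruence `c ≠ ⊥` on `F`
is a modular element of the lattice of fully invariant congruences, then `c`
relates `xⁿ` and `xⁿ⁺ᵐ` for some `n, m ≥ 1`. -/
theorem periodic_of_modular (c : FICon) (hc : c ≠ ⊥)
    (hmod : ∀ b d : FICon, b ≤ d → (c ⊓ d) ⊔ b = (c ⊔ b) ⊓ d) :
    ∃ n m : ℕ, 1 ≤ n ∧ 1 ≤ m ∧ c.1 (x ^ n) (x ^ (n + m)) := by
  by_contra hper
  obtain ⟨w₁, w₂, h, hne⟩ := exists_rel_ne_of_ne_bot hc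
  obtain ⟨b, d, hbd, hbd_ne⟩ :=
    exists_not_modular_of_le_identities (le_identities_of_not_isPeriodic hper) h hne
  exact hbd_ne (hmod b d hbd)
end
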